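/- arXiv:1203.1521 — 3 statements merged into one kernel-verified Lean document; each statement's English description precedes it below -/
import Mathlib

section
/- If A satisfies the RIP of order K with constant δ_K, then for any vector s ∈ ℝ^N (not necessarily sparse), ‖As‖₂ ≤ √(1+δ_K) · (‖s‖₂ + ‖s‖₁/√K). -/
open Matrix Finset

/-- The ℓ₂ norm of a finite real vector. -/
noncomputable def l2 {n : ℕ} (v : Fin n → ℝ) : ℝ := Real.sqrt (∑ i, (v i) ^ 2)

/-- The ℓ₁ norm of a finite real vector. -/
noncomputable def l1 {n : ℕ} (v : Fin n → ℝ) : ℝ := ∑ i, |v i|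

/-- A vector is `K`-sparse if it has at most `K` nonzero entries. -/
def IsSparse {n : ℕ} (K : ℕ) (v : Fin n → ℝ) : Prop :=
  ∃ S : Finset (Fin n), S.card ≤ K ∧ ∀ i ∉ S, v i = 0

/-- `A` satisfies the RIP of order `K` with constant `δ`. -/
def SatisfiesRIP {m n : ℕ} (A : Matrix (Fin m) (Fin n) ℝ) (K : ℕ) (δ : ℝ) : Prop :=
  ∀ v : Fin n → ℝ, IsSparse K v →
    (1 - δ) * (l2 v) ^ 2 ≤ (l2 (A.mulVec v)) ^ 2 ∧
      (l2 (A.mulVec v)) ^ 2 ≤ (1 + δ) * (l2 v) ^ 2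

/-- Spectral norm (ℓ₂ operator norm) of a matrix. -/
noncomputable def specNorm {m n : ℕ} (A : Matrix (Fin m) (Fin n) ℝ) : ℝ :=
  sSup {c | ∃ v : Fin n → ℝ, l2 v ≤ 1 ∧ c = l2 (A.mulVec v)}

/-- The matrix with the columns of `A` indexed by `S` kept and all other columns zeroed,
representing the column-submatrix `A_S`. -/
def colRestrict {m n : ℕ} (A : Matrix (Fin m) (Fin n) ℝ) (S : Finset (Fin n)) :
    Matrix (Fin m) (Fin n) ℝ := fun i j => if j ∈ S then A i j else 0

/-- `‖A‖₂^{(K)}`: the largest spectral norm over all `K`-column submatrices of `A`. -/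
noncomputable def subNorm {m n : ℕ} (A : Matrix (Fin m) (Fin n) ℝ) (K : ℕ) : ℝ :=
  sSup {c | ∃ S : Finset (Fin n), S.card = K ∧ c = specNorm (colRestrict A S)}

/-- The pseudo-inverse `(BᵀB)⁻¹Bᵀ` of a full-column-rank matrix `B`. -/
noncomputable def pinv {m k : ℕ} (B : Matrix (Fin m) (Fin k) ℝ) : Matrix (Fin k) (Fin m) ℝ :=
  (Bᵀ * B)⁻¹ * Bᵀ

/-- `sK` is a best `K`-term (ℓ₂) approximation of `s`. -/
def IsBestApprox {n : ℕ} (K : ℕ) (s sK : Fin n → ℝ) : Prop :=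
  IsSparse K sK ∧ ∀ t : Fin n → ℝ, IsSparse K t → l2 (s - sK) ≤ l2 (s - t)

/-- Embed a vector indexed by `Fin k` into `Fin n` along an injection `f` (zero elsewhere). -/
noncomputable def embedVec {k n : ℕ} (f : Fin k → Fin n) (w : Fin k → ℝ) : Fin n → ℝ :=
  fun j => ∑ i, if f i = j then w i else 0

/-! Order the coordinates of `s` by decreasing magnitude and cut them into blocks of `K`.
By RIP each block `s_B` satisfies `‖A s_B‖₂ ≤ √(1+δ) ‖s_B‖₂`. The first block has `‖s_B‖₂ ≤ ‖s‖₂`;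
every later block has entries bounded by the smallest entry `M` of the previous block `B'`, so
`‖s_B‖₂ ≤ √K M ≤ ‖s_B'‖₁ / √K`. Summing by the triangle inequality gives the bound. -/

open Real

lemma le_sqrt_mul_of_sq_le_mul_sq {x y c : ℝ} (hy : 0 ≤ y) (h : x ^ 2 ≤ c * y ^ 2) :
    x ≤ √c * y :=
  calc x ≤ √(x ^ 2) := by rw [sqrt_sq_eq_abs]; exact le_abs_self x
    _ ≤ √(c * y ^ 2) := sqrt_le_sqrt h
    _ = √c * y := by rw [sqrt_mul' c (sq_nonneg y), sqrt_sq hy]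

theorem Finset.exists_subset_card_eq_forall_sdiff_le {ι α : Type*} [DecidableEq ι]
    [LinearOrder α] (f : ι → α) (U : Finset ι) {k : ℕ} (hk : k ≤ #U) :
    ∃ T ⊆ U, #T = k ∧ ∀ i ∈ T, ∀ j ∈ U \ T, f j ≤ f i := by
  induction k with
  | zero => exact ⟨∅, empty_subset _, rfl, by simp⟩
  | succ k ih =>
    obtain ⟨T, hTU, hTk, hTtop⟩ := ih (Nat.le_of_succ_le hk)
    have hne : (U \ T).Nonempty := by
      rw [← card_pos, card_sdiff_of_subset hTU, hTk]; omega
    obtain ⟨j₀, hj₀, hj₀max⟩ := exists_max_image (U \ T) f hne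
    obtain ⟨hj₀U, hj₀T⟩ := mem_sdiff.mp hj₀
    refine ⟨insert j₀ T, insert_subset hj₀U hTU, by rw [card_insert_of_notMem hj₀T, hTk], ?_⟩
    intro i hi j hj
    have hj' : j ∈ U \ T := by
      simp only [mem_sdiff, mem_insert, not_or] at hj ⊢
      exact ⟨hj.1, hj.2.2⟩
    rcases mem_insert.mp hi with rfl | hi
    · exact hj₀max j hj'
    · exact hTtop i hi j hj'

section Norms

variable {n : ℕ}

lemma l2_nonneg (v : Fin n → ℝ) : 0 ≤ l2 v := sqrt_nonneg _

lemma l1_nonneg (v : Fin n → ℝ) : 0 ≤ l1 v := sum_nonneg fun _ _ => abs_nonneg _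

lemma l2_zero : l2 (0 : Fin n → ℝ) = 0 := by simp [l2]

lemma l2_sq (v : Fin n → ℝ) : l2 v ^ 2 = ∑ i, v i ^ 2 :=
  sq_sqrt (sum_nonneg fun _ _ => sq_nonneg _)

lemma l2_eq_norm_toLp (v : Fin n → ℝ) : l2 v = ‖WithLp.toLp 2 v‖ := by
  simp [EuclideanSpace.norm_eq, l2]

lemma l2_add_le (u v : Fin n → ℝ) : l2 (u + v) ≤ l2 u + l2 v := by
  simpa only [l2_eq_norm_toLp, WithLp.toLp_add] using norm_add_le _ _

lemma l2_indicator_le (T : Set (Fin n)) (s : Fin n → ℝ) : l2 (T.indicator s) ≤ l2 s := by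
  refine sqrt_le_sqrt (sum_le_sum fun i _ => ?_)
  by_cases hi : i ∈ T <;> simp [hi, sq_nonneg]

lemma l2_indicator_le_sqrt_card_mul (T : Finset (Fin n)) {s : Fin n → ℝ} {M : ℝ} (hM : 0 ≤ M)
    (hs : ∀ i ∈ T, |s i| ≤ M) : l2 ((T : Set (Fin n)).indicator s) ≤ √(#T : ℝ) * M := by
  refine le_sqrt_mul_of_sq_le_mul_sq hM ?_
  calc l2 ((T : Set (Fin n)).indicator s) ^ 2 = ∑ i ∈ T, s i ^ 2 := by
        rw [l2_sq, ← sum_indicator_subset _ (subset_univ T)]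
        refine sum_congr rfl fun i _ => ?_
        by_cases hi : i ∈ T <;> simp [hi]
    _ ≤ ∑ _i ∈ T, M ^ 2 :=
        sum_le_sum fun i hi => sq_le_sq.mpr (by rw [abs_of_nonneg hM]; exact hs i hi)
    _ = #T * M ^ 2 := by rw [sum_const, nsmul_eq_mul]

lemma l1_indicator (T : Finset (Fin n)) (s : Fin n → ℝ) :
    l1 ((T : Set (Fin n)).indicator s) = ∑ i ∈ T, |s i| := by
  rw [l1, ← sum_indicator_subset _ (subset_univ T)]
  refine sum_congr rfl fun i _ => ?_
  by_cases hi : i ∈ T <;> simp [hi]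

lemma l1_indicator_add_compl (T : Set (Fin n)) (s : Fin n → ℝ) :
    l1 (T.indicator s) + l1 (Tᶜ.indicator s) = l1 s := by
  rw [l1, l1, l1, ← sum_add_distrib]
  refine sum_congr rfl fun i _ => ?_
  by_cases hi : i ∈ T <;> simp [hi]

end Norms

/-- `T` is taken to be the `min K #U` largest entries of `s` on `U`, and `M` the smallest of them
(or `0` when `T = U`). -/
lemma exists_head_block {ι : Type*} [DecidableEq ι] (s : ι → ℝ) (U : Finset ι) {K : ℕ}
    (hK : 0 < K) (hs : ∀ i ∉ U, s i = 0) :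
    ∃ T ⊆ U, #T ≤ K ∧ (U.Nonempty → T.Nonempty) ∧ ∃ M, 0 ≤ M ∧
      (∀ i, |(T : Set ι)ᶜ.indicator s i| ≤ M) ∧ K * M ≤ ∑ i ∈ T, |s i| := by
  rcases le_or_gt #U K with hUK | hKU
  · refine ⟨U, subset_refl U, hUK, id, 0, le_rfl, fun i => ?_, by simp [sum_nonneg]⟩
    by_cases hi : i ∈ U <;> simp [hi, hs]
  obtain ⟨T, hTU, hTK, hTtop⟩ := exists_subset_card_eq_forall_sdiff_le (|s ·|) U hKU.le
  obtain ⟨i₀, hi₀, hi₀min⟩ := exists_min_image T (|s ·|) (card_pos.mp (hTK ▸ hK))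
  refine ⟨T, hTU, hTK.le, fun _ => ⟨i₀, hi₀⟩, |s i₀|, abs_nonneg _, fun i => ?_, ?_⟩
  · by_cases hiT : i ∈ T
    · simp [hiT]
    by_cases hiU : i ∈ U
    · simpa [hiT] using hTtop i₀ hi₀ i (mem_sdiff.mpr ⟨hiU, hiT⟩)
    · simp [hiT, hs i hiU]
  · simpa [hTK] using card_nsmul_le_sum T (|s ·|) _ hi₀min

section RIP

variable {m n K : ℕ} {A : Matrix (Fin m) (Fin n) ℝ} {δ : ℝ}

lemma SatisfiesRIP.l2_mulVec_le (hA : SatisfiesRIP A K δ) {v : Fin n → ℝ} (hv : IsSparse K v) :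
    l2 (A *ᵥ v) ≤ √(1 + δ) * l2 v :=
  le_sqrt_mul_of_sq_le_mul_sq (l2_nonneg v) (hA v hv).2

lemma SatisfiesRIP.l2_mulVec_le_of_head_block (hA : SatisfiesRIP A K δ) (hK : 0 < K)
    {s : Fin n → ℝ} {T : Finset (Fin n)} (hT : #T ≤ K) {M : ℝ} (hM : K * M ≤ ∑ i ∈ T, |s i|)
    (htail : l2 (A *ᵥ (T : Set (Fin n))ᶜ.indicator s) ≤
      √(1 + δ) * (√K * M + l1 ((T : Set (Fin n))ᶜ.indicator s) / √K)) :
    l2 (A *ᵥ s) ≤ √(1 + δ) * (l2 ((T : Set (Fin n)).indicator s) + l1 s / √K) := by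
  have hsqrtK : 0 < √(K : ℝ) := sqrt_pos.mpr (Nat.cast_pos.mpr hK)
  have hMK : √K * M ≤ l1 ((T : Set (Fin n)).indicator s) / √K := by
    rw [le_div_iff₀ hsqrtK, l1_indicator, mul_right_comm, mul_self_sqrt (Nat.cast_nonneg K)]
    exact hM
  calc l2 (A *ᵥ s)
      ≤ l2 (A *ᵥ (T : Set (Fin n)).indicator s) + l2 (A *ᵥ (T : Set (Fin n))ᶜ.indicator s) := by
        have := l2_add_le (A *ᵥ (T : Set (Fin n)).indicator s) (A *ᵥ (T : Set (Fin n))ᶜ.indicator s)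
        rwa [← mulVec_add, Set.indicator_self_add_compl] at this
    _ ≤ √(1 + δ) * l2 ((T : Set (Fin n)).indicator s) +
          √(1 + δ) * (l1 ((T : Set (Fin n)).indicator s) / √K +
            l1 ((T : Set (Fin n))ᶜ.indicator s) / √K) := by
        gcongr
        · exact hA.l2_mulVec_le ⟨T, hT, fun _ hi => Set.indicator_of_notMem hi s⟩
        · exact htail.trans (by gcongr)
    _ = √(1 + δ) * (l2 ((T : Set (Fin n)).indicator s) + l1 s / √K) := by
        rw [← l1_indicator_add_compl (T : Set (Fin n)) s]; ring

lemma SatisfiesRIP.l2_mulVec_le_of_abs_le (hA : SatisfiesRIP A K δ) (hK : 0 < K)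
    (U : Finset (Fin n)) (s : Fin n → ℝ) (hs : ∀ i ∉ U, s i = 0) {M : ℝ} (hM₀ : 0 ≤ M)
    (hM : ∀ i, |s i| ≤ M) : l2 (A *ᵥ s) ≤ √(1 + δ) * (√K * M + l1 s / √K) := by
  induction U using Finset.strongInduction generalizing s M with
  | H U ih =>
  rcases U.eq_empty_or_nonempty with rfl | hU
  · have hs0 : s = 0 := funext fun i => hs i (notMem_empty i)
    rw [hs0, mulVec_zero, l2_zero]
    exact mul_nonneg (sqrt_nonneg _) (add_nonneg (mul_nonneg (sqrt_nonneg _) hM₀)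
      (div_nonneg (l1_nonneg _) (sqrt_nonneg _)))
  obtain ⟨T, hTU, hTK, hTne, M', hM'₀, hM', hKM'⟩ := exists_head_block s U hK hs
  have htail := ih (U \ T) (sdiff_ssubset hTU (hTne hU)) ((T : Set (Fin n))ᶜ.indicator s)
    (fun i hi => by by_cases hiT : i ∈ T <;> simp_all) hM'₀ hM'
  refine (hA.l2_mulVec_le_of_head_block hK hTK hKM' htail).trans ?_
  gcongr
  calc l2 ((T : Set (Fin n)).indicator s) ≤ √(#T : ℝ) * M :=
        l2_indicator_le_sqrt_card_mul T hM₀ fun i _ => hM i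
    _ ≤ √K * M := by gcongr

end RIP

/-- RIP bound for general (not necessarily sparse) signals. -/
theorem stmt1 {m n : ℕ} (A : Matrix (Fin m) (Fin n) ℝ) (K : ℕ) (hK : 0 < K) (δ : ℝ)
    (h : SatisfiesRIP A K δ) (s : Fin n → ℝ) :
    l2 (A.mulVec s) ≤ Real.sqrt (1 + δ) * (l2 s + l1 s / Real.sqrt K) := by
  obtain ⟨T, -, hTK, -, M, hM₀, hM, hKM⟩ := exists_head_block s univ hK (by simp)
  have htail := h.l2_mulVec_le_of_abs_le hK univ _ (by simp) hM₀ hM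
  refine (h.l2_mulVec_le_of_head_block hK hTK hKM htail).trans ?_
  gcongr
  exact l2_indicator_le _ s
end

section
/- Let s ∈ ℝ^N be a strong-decaying signal with decay factor p > 1, meaning its magnitudes sorted in decreasing order satisfy |s|_{(l)} ≥ p·|s|_{(l+1)} for 1 ≤ l ≤ N−1. Let s_K be the best K-term approximation (keeping the K largest magnitudes) and s_K^c = s − s_K. Then ‖s_K^c‖₂ / ‖s‖₂ ≤ p^{−K}. -/
open Matrix Finset

/-! Iterating the decay condition gives `|s (n + K)| ≤ p⁻ᴷ |s n|`, so the tail energy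
`∑_{n ≥ K} s n ²` is at most `p⁻²ᴷ` times the energy of the entries shifted back by `K`,
which is at most `‖s‖₂²`. -/

def extendByZero {N : ℕ} (s : Fin N → ℝ) (n : ℕ) : ℝ :=
  if h : n < N then s ⟨n, h⟩ else 0

@[simp]
theorem extendByZero_val {N : ℕ} (s : Fin N → ℝ) (i : Fin N) : extendByZero s i = s i := by
  simp [extendByZero]

theorem mul_abs_extendByZero_succ_le {N : ℕ} {s : Fin N → ℝ} {p : ℝ}
    (hdecay : ∀ l : Fin N, ∀ hl : (l : ℕ) + 1 < N, |s l| ≥ p * |s ⟨(l : ℕ) + 1, hl⟩|)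
    (n : ℕ) : p * |extendByZero s (n + 1)| ≤ |extendByZero s n| := by
  by_cases hn : n + 1 < N
  · simpa [extendByZero, hn, show n < N by omega] using hdecay ⟨n, by omega⟩ hn
  · simp [extendByZero, hn]

section Decay

variable {a : ℕ → ℝ} {p : ℝ}

theorem pow_mul_abs_add_le_of_decay (hp : 0 ≤ p) (ha : ∀ n, p * |a (n + 1)| ≤ |a n|)
    (n k : ℕ) : p ^ k * |a (n + k)| ≤ |a n| := by
  induction k with
  | zero => simp
  | succ k ih =>
    calc p ^ (k + 1) * |a (n + (k + 1))| = p ^ k * (p * |a (n + k + 1)|) := by ring_nf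
      _ ≤ p ^ k * |a (n + k)| := by gcongr; exact ha _
      _ ≤ |a n| := ih

theorem sq_add_le_of_decay (hp : 0 < p) (ha : ∀ n, p * |a (n + 1)| ≤ |a n|) (n k : ℕ) :
    a (n + k) ^ 2 ≤ (p ^ k)⁻¹ ^ 2 * a n ^ 2 := by
  have h : |a (n + k)| ≤ (p ^ k)⁻¹ * |a n| := by
    rw [inv_mul_eq_div, le_div_iff₀ (by positivity), mul_comm]
    exact pow_mul_abs_add_le_of_decay hp.le ha n k
  rw [← sq_abs, ← sq_abs (a n), ← mul_pow]
  gcongr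

theorem sum_Ico_sq_le_of_decay (hp : 0 < p) (ha : ∀ n, p * |a (n + 1)| ≤ |a n|) (K N : ℕ) :
    ∑ n ∈ Ico K N, a n ^ 2 ≤ (p ^ K)⁻¹ ^ 2 * ∑ n ∈ range N, a n ^ 2 :=
  calc ∑ n ∈ Ico K N, a n ^ 2 = ∑ m ∈ range (N - K), a (K + m) ^ 2 :=
        sum_Ico_eq_sum_range _ _ _
    _ ≤ ∑ m ∈ range (N - K), (p ^ K)⁻¹ ^ 2 * a m ^ 2 := by
      gcongr with m
      simpa [add_comm] using sq_add_le_of_decay hp ha m K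
    _ = (p ^ K)⁻¹ ^ 2 * ∑ m ∈ range (N - K), a m ^ 2 := (mul_sum _ _ _).symm
    _ ≤ (p ^ K)⁻¹ ^ 2 * ∑ n ∈ range N, a n ^ 2 := by
      gcongr
      exact Nat.sub_le N K

end Decay

theorem l2_le_mul_of_sum_sq_le {n : ℕ} {v w : Fin n → ℝ} {c : ℝ} (hc : 0 ≤ c)
    (h : ∑ i, v i ^ 2 ≤ c ^ 2 * ∑ i, w i ^ 2) : l2 v ≤ c * l2 w := by
  rw [l2, l2, ← Real.sqrt_sq hc, ← Real.sqrt_mul (sq_nonneg c)]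
  exact Real.sqrt_le_sqrt h

theorem sum_sq_ite_lt_eq_sum_Ico {N : ℕ} (s : Fin N → ℝ) (K : ℕ) :
    ∑ i : Fin N, (if (i : ℕ) < K then 0 else s i) ^ 2 =
      ∑ n ∈ Ico K N, extendByZero s n ^ 2 := by
  have hIco : (range N).filter (fun n => ¬ n < K) = Ico K N := by
    ext n; simp only [mem_filter, mem_range, mem_Ico]; omega
  rw [← hIco, sum_filter,
    ← Fin.sum_univ_eq_sum_range (fun n => if ¬ n < K then extendByZero s n ^ 2 else 0)]
  refine sum_congr rfl fun i _ => ?_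
  split_ifs <;> simp

theorem stmt5_general {N : ℕ} (s : Fin N → ℝ) (p : ℝ) (hp : 1 < p)
    (hdecay : ∀ l : Fin N, ∀ hl : (l : ℕ) + 1 < N, |s l| ≥ p * |s ⟨(l : ℕ) + 1, hl⟩|)
    (K : ℕ) :
    l2 (fun i => if (i : ℕ) < K then 0 else s i) / l2 s ≤ p ^ (-(K : ℤ)) := by
  have hp0 : 0 < p := zero_lt_one.trans hp
  have htail : ∑ i : Fin N, (if (i : ℕ) < K then 0 else s i) ^ 2
      ≤ (p ^ K)⁻¹ ^ 2 * ∑ i, s i ^ 2 := by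
    have hsum : ∑ i, s i ^ 2 = ∑ n ∈ range N, extendByZero s n ^ 2 := by
      simp [← Fin.sum_univ_eq_sum_range (fun n => extendByZero s n ^ 2) N]
    rw [sum_sq_ite_lt_eq_sum_Ico, hsum]
    exact sum_Ico_sq_le_of_decay hp0 (mul_abs_extendByZero_succ_le hdecay) K N
  rw [_root_.zpow_neg, zpow_natCast]
  exact div_le_of_le_mul₀ (Real.sqrt_nonneg _) (by positivity)
    (l2_le_mul_of_sum_sq_le (by positivity) htail)

/-- For a strong-decaying signal (sorted magnitudes decaying with ratio `p > 1`),
the relative ℓ₂ tail after the best `K`-term approximation is at most `p^{-K}`. -/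
theorem stmt5 {N : ℕ} (s : Fin N → ℝ) (hs : s ≠ 0) (p : ℝ) (hp : 1 < p)
    (hdecay : ∀ l : Fin N, ∀ hl : (l : ℕ) + 1 < N, |s l| ≥ p * |s ⟨(l : ℕ) + 1, hl⟩|)
    (K : ℕ) (hK1 : 1 ≤ K) (hKN : K ≤ N) :
    l2 (fun i => if (i : ℕ) < K then 0 else s i) / l2 s ≤ p ^ (-(K : ℤ)) :=
  stmt5_general s p hp hdecay K
end

section
/- Suppose A satisfies the RIP of order K with δ_K < 1 and S is an index set with |S| ≤ K. Then for any vector v in the column space of A_S, ‖A_S^T v‖₂ ≥ √(1−δ_K) · ‖v‖₂. -/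
open Matrix Finset

/-- Under RIP of order `K` with `δ < 1`, for any `v` in the column space of `A_S`
with `|S| ≤ K`, `‖A_Sᵀ v‖₂ ≥ √(1-δ)·‖v‖₂`. -/
theorem stmt8 {m n k K : ℕ} (A : Matrix (Fin m) (Fin n) ℝ) (δ : ℝ) (hδ : δ < 1)
    (h : SatisfiesRIP A K δ) (f : Fin k → Fin n) (hf : Function.Injective f) (hk : k ≤ K)
    (v : Fin m → ℝ) (hv : ∃ u : Fin k → ℝ, v = (A.submatrix id f).mulVec u) :
    l2 ((A.submatrix id f)ᵀ.mulVec v) ≥ Real.sqrt (1 - δ) * l2 v := by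
  obtain ⟨u, hu⟩ := hv
  set B := A.submatrix id f with hB
  set w : Fin n → ℝ := embedVec f u with hw
  have hδ' : (0:ℝ) < 1 - δ := by linarith
  have hsp : IsSparse K w := by
    refine ⟨Finset.image f Finset.univ, le_trans Finset.card_image_le (by simpa using hk), ?_⟩
    intro j hj
    simp only [hw, embedVec]
    refine Finset.sum_eq_zero fun i _ => ?_
    rw [if_neg]
    intro hfi; exact hj (Finset.mem_image.mpr ⟨i, Finset.mem_univ i, hfi⟩)
  have hAw : A.mulVec w = B.mulVec u := by
    funext i
    simp only [Matrix.mulVec, dotProduct, hw, embedVec, hB, Matrix.submatrix_apply, id]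
    calc ∑ j, A i j * ∑ i', (if f i' = j then u i' else 0)
        = ∑ j, ∑ i', (if f i' = j then A i j * u i' else 0) := by
          refine Finset.sum_congr rfl fun j _ => ?_
          rw [Finset.mul_sum]
          exact Finset.sum_congr rfl fun i' _ => by split <;> simp
      _ = ∑ i', ∑ j, (if f i' = j then A i j * u i' else 0) := Finset.sum_comm
      _ = ∑ i', A i (f i') * u i' := by
          refine Finset.sum_congr rfl fun i' _ => ?_
          simp
  have hwfi : ∀ i, w (f i) = u i := by
    intro i
    simp only [hw, embedVec, hf.eq_iff]
    simp
  have hl2w : ∑ j, (w j) ^ 2 = ∑ i, (u i) ^ 2 := by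
    rw [← Finset.sum_subset (Finset.subset_univ (Finset.image f Finset.univ))]
    · rw [Finset.sum_image (fun a _ b _ hab => hf hab)]
      exact Finset.sum_congr rfl fun i _ => by rw [hwfi]
    · intro j _ hj
      have : w j = 0 := by
        simp only [hw, embedVec]
        refine Finset.sum_eq_zero fun i _ => ?_
        rw [if_neg]
        intro hfi; exact hj (Finset.mem_image.mpr ⟨i, Finset.mem_univ i, hfi⟩)
      simp [this]
  set Sv := ∑ j, (v j) ^ 2 with hSv
  set Su := ∑ i, (u i) ^ 2 with hSu
  set Sw := ∑ i, ((Bᵀ.mulVec v) i) ^ 2 with hSw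
  have hSvnn : 0 ≤ Sv := Finset.sum_nonneg fun _ _ => sq_nonneg _
  have hSunn : 0 ≤ Su := Finset.sum_nonneg fun _ _ => sq_nonneg _
  have hSwnn : 0 ≤ Sw := Finset.sum_nonneg fun _ _ => sq_nonneg _
  -- inner product identity
  have hP : ∑ i, (Bᵀ.mulVec v) i * u i = Sv := by
    simp only [Matrix.mulVec, dotProduct, Matrix.transpose_apply]
    calc ∑ i, (∑ j, B j i * v j) * u i
        = ∑ i, ∑ j, B j i * u i * v j := by
          refine Finset.sum_congr rfl fun i _ => ?_
          rw [Finset.sum_mul]; exact Finset.sum_congr rfl fun j _ => by ring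
      _ = ∑ j, (∑ i, B j i * u i) * v j := by
          rw [Finset.sum_comm]
          exact Finset.sum_congr rfl fun j _ => (Finset.sum_mul _ _ _).symm
      _ = Sv := by
          refine Finset.sum_congr rfl fun j _ => ?_
          have : (∑ i, B j i * u i) = v j := by rw [hu]; rfl
          rw [this]; ring
  have hCS : Sv ^ 2 ≤ Sw * Su := by
    calc Sv ^ 2 = (∑ i, (Bᵀ.mulVec v) i * u i) ^ 2 := by rw [hP]
      _ ≤ Sw * Su := Finset.sum_mul_sq_le_sq_mul_sq _ _ _
  have hRIP := (h w hsp).1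
  have hl2sq : ∀ (N : ℕ) (x : Fin N → ℝ), (l2 x) ^ 2 = ∑ i, (x i) ^ 2 := by
    intro N x
    exact Real.sq_sqrt (Finset.sum_nonneg fun _ _ => sq_nonneg _)
  rw [hl2sq, hl2sq, hl2w, hAw] at hRIP
  have hvB : ∑ i, (B.mulVec u i) ^ 2 = Sv := by rw [← hu]
  rw [hvB] at hRIP
  -- hRIP : (1 - δ) * Su ≤ Sv
  have key : (1 - δ) * Sv ≤ Sw := by
    rcases eq_or_lt_of_le hSunn with hS0 | hS0
    · have : Sv ^ 2 ≤ 0 := by rw [← hS0] at hCS; linarith [hCS]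
      have : Sv = 0 := by nlinarith
      rw [this]; simpa using hSwnn
    · have h1 : (1 - δ) * Sv * Su ≤ Sv * Sv := by nlinarith
      have h2 : Sv * Sv ≤ Sw * Su := by nlinarith
      exact le_of_mul_le_mul_right (le_trans h1 h2) hS0
  have : Real.sqrt ((1 - δ) * Sv) ≤ Real.sqrt Sw := Real.sqrt_le_sqrt key
  rw [Real.sqrt_mul (le_of_lt hδ')] at this
  simpa [l2, hSv, hSw, ge_iff_le] using this
end
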